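/- Let G be a directed graph on n vertices, let β ≥ 8 be an integer, and let H ⊆ TC(G). Let q be a path in G ∪ H that is a shortest path between its endpoints and has at most ⌊β/4⌋ vertices, let q* be a subset of the vertices of q, and let u be a vertex of G. Let X be the set of pairs (s, t) ∈ TC(G) with dist_{G∪H}(s, t) ≥ β for which there exists a shortest s–t path π in G ∪ H such that u is among the first ⌊k/4⌋ vertices of π and at least one of the last ⌊k/4⌋ vertices of π belongs to q*, where k is the number of vertices of π. If X is nonempty, then there exists a vertex v ∈ q* with (u, v) ∈ TC(G) and Δ((u, v) | H) ≥ (β/8) · |X|. -/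

import Mathlib

open scoped Classical

/-- An edge of a directed graph on vertex set `Fin n`. -/
abbrev Edge (n : ℕ) := Fin n × Fin n

/-- `l` is a directed path in the graph with edge set `E`:
a sequence of distinct vertices, each consecutive pair joined by an edge. -/
def IsPathList {n : ℕ} (E : Set (Edge n)) (l : List (Fin n)) : Prop :=
  l.Nodup ∧ l.Chain' (fun a b => (a, b) ∈ E)

/-- `l` is a directed path from `u` to `v` in the graph with edge set `E`. -/
def IsPathFromTo {n : ℕ} (E : Set (Edge n)) (u v : Fin n) (l : List (Fin n)) : Prop :=
  IsPathList E l ∧ l.head? = some u ∧ l.getLast? = some v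

/-- `hdist E u v` is the minimum number of edges on a directed path from `u` to `v`
(`⊤` if no such path exists). -/
noncomputable def hdist {n : ℕ} (E : Set (Edge n)) (u v : Fin n) : ℕ∞ :=
  sInf {k : ℕ∞ | ∃ l : List (Fin n), IsPathFromTo E u v l ∧ (l.length : ℕ∞) = k + 1}

/-- `(u, v)` is in the transitive closure: `u ≠ v` and `v` is reachable from `u`. -/
def TCrel {n : ℕ} (E : Set (Edge n)) (u v : Fin n) : Prop :=
  u ≠ v ∧ ∃ l : List (Fin n), IsPathFromTo E u v l

/-- The transitive closure of the graph with edge set `E`, as a set of pairs. -/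
def TCset {n : ℕ} (E : Set (Edge n)) : Set (Edge n) := {p | TCrel E p.1 p.2}

/-- `H` is a shortcut set with hopbound `β` for the graph with edge set `E`. -/
def IsShortcutSet {n : ℕ} (E H : Set (Edge n)) (β : ℕ) : Prop :=
  H ⊆ TCset E ∧ ∀ p ∈ TCset E, hdist (E ∪ H) p.1 p.2 ≤ (β : ℕ∞)

/-- The potential `φ(H)`: the sum of `dist_{G∪H}(s,t)` over all pairs `(s,t)` in the
transitive closure of `G` with `dist_{G∪H}(s,t) ≥ β`. -/
noncomputable def potential {n : ℕ} (E H : Set (Edge n)) (β : ℕ) : ℕ :=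
  ∑ p : Edge n,
    if TCrel E p.1 p.2 ∧ (β : ℕ∞) ≤ hdist (E ∪ H) p.1 p.2
    then (hdist (E ∪ H) p.1 p.2).toNat else 0

/-- `Δ((u,v) | H) = φ(H) - φ(H ∪ {(u,v)})`. -/
noncomputable def pdelta {n : ℕ} (E H : Set (Edge n)) (β : ℕ) (e : Edge n) : ℕ :=
  potential E H β - potential E (H ∪ {e}) β

/-!
Among the vertices of `q*` that occur in the last quarter of some shortest path witnessing
membership in `X`, let `v` be the one that comes first along `q`. For a pair `(s, t) ∈ X` with
witnessing path `π`, late vertex `x ∈ q*`, and `u` early on `π`, the walk `s ⇝ u → v ⇝ x ⇝ t`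
(along `π`, the new edge, `q`, and `π` again) has fewer than `|π|/2 + β/4` edges, whereas `π`
has at least `β`. So adding `(u, v)` lowers the contribution of `(s, t)` to the potential by at
least `β/8`, whether or not the pair stays above the threshold `β`. Finally `(u, v) ∈ TC(G)`
since `u` precedes `v` on a path of `G ∪ H` and `H ⊆ TC(G)`.
-/

namespace List

variable {α : Type*} {R : α → α → Prop}

theorem IsChain.exists_nodup_same_ends {l : List α} (h : l.IsChain R) :
    ∃ l' : List α, l'.Nodup ∧ l'.IsChain R ∧ l'.head? = l.head? ∧
      l'.getLast? = l.getLast? ∧ l'.length ≤ l.length := by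
  induction l with
  | nil => exact ⟨[], nodup_nil, .nil, rfl, rfl, le_rfl⟩
  | cons a l ih =>
    obtain ⟨l', hnd, hch, hhead, hlast, hlen⟩ := ih h.tail
    by_cases ha : a ∈ l'
    · obtain ⟨r, r', rfl⟩ := append_of_mem ha
      have hl : l ≠ [] := by rintro rfl; simp at hhead
      refine ⟨a :: r', hnd.sublist (sublist_append_right _ _), hch.right_of_append, rfl, ?_, ?_⟩
      · rw [← getLast?_append_of_ne_nil r (cons_ne_nil a r'), hlast, getLast?_cons,
          getLast?_eq_some_getLast hl]
        rfl
      · simp only [length_append, length_cons] at hlen ⊢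
        omega
    · refine ⟨a :: l', nodup_cons.2 ⟨ha, hnd⟩, List.isChain_cons.2 ⟨?_, hch⟩, rfl, ?_, ?_⟩
      · rw [hhead]
        exact (List.isChain_cons.1 h).1
      · rw [getLast?_cons, getLast?_cons, hlast]
      · simpa using hlen

end List

section Walks

variable {n : ℕ} {E E' : Set (Edge n)} {u v w : Fin n} {l l' : List (Fin n)}

def IsWalk (E : Set (Edge n)) (u v : Fin n) (l : List (Fin n)) : Prop :=
  l.IsChain (fun a b => (a, b) ∈ E) ∧ l.head? = some u ∧ l.getLast? = some v

theorem IsWalk.length_pos (h : IsWalk E u v l) : 0 < l.length := by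
  cases l with
  | nil => simp [IsWalk] at h
  | cons => simp

theorem IsPathFromTo.isWalk (h : IsPathFromTo E u v l) : IsWalk E u v l :=
  ⟨h.1.2, h.2⟩

theorem IsPathFromTo.mono (hE : E ⊆ E') (h : IsPathFromTo E u v l) : IsPathFromTo E' u v l :=
  ⟨⟨h.1.1, h.1.2.imp fun _ _ hab => hE hab⟩, h.2⟩

theorem IsWalk.exists_isPathFromTo (h : IsWalk E u v l) :
    ∃ l', IsPathFromTo E u v l' ∧ l'.length ≤ l.length := by
  obtain ⟨l', hnd, hch, hhead, hlast, hlen⟩ := h.1.exists_nodup_same_ends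
  exact ⟨l', ⟨⟨hnd, hch⟩, hhead.trans h.2.1, hlast.trans h.2.2⟩, hlen⟩

theorem IsWalk.append (h : IsWalk E u v l) (h' : IsWalk E v w (v :: l')) :
    IsWalk E u w (l ++ l') := by
  obtain ⟨hch, hhead, hlast⟩ := h
  obtain ⟨hch', -, hlast'⟩ := h'
  have hl : l ≠ [] := by rintro rfl; simp at hhead
  refine ⟨List.isChain_append.2 ⟨hch, hch'.tail, ?_⟩, ?_, ?_⟩
  · intro x hx y hy
    rw [hlast, Option.mem_some_iff] at hx
    exact hx ▸ List.isChain_cons.1 hch' |>.1 y hy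
  · rw [List.head?_append, hhead]; rfl
  · rw [List.getLast?_append, hlast]
    rw [List.getLast?_cons] at hlast'
    cases hl' : l'.getLast? <;> simp_all

theorem exists_isPathFromTo_iff_reflTransGen :
    (∃ l, IsPathFromTo E u v l) ↔ Relation.ReflTransGen (fun a b => (a, b) ∈ E) u v := by
  constructor
  · rintro ⟨_ | ⟨a, l⟩, ⟨-, hch⟩, hhead, hlast⟩
    · simp at hhead
    · obtain rfl : a = u := by simpa using hhead
      exact List.relationReflTransGen_of_exists_isChain_cons l hch
        (by rw [List.getLast?_eq_some_getLast (List.cons_ne_nil a l)] at hlast; simpa using hlast)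
  · intro h
    obtain ⟨l, hch, hlast⟩ := List.exists_isChain_cons_of_relationReflTransGen h
    obtain ⟨l', hl', -⟩ := IsWalk.exists_isPathFromTo
      ⟨hch, rfl, by rw [List.getLast?_eq_some_getLast (List.cons_ne_nil u l), hlast]⟩
    exact ⟨l', hl'⟩

end Walks

section Distance

variable {n : ℕ} {E E' : Set (Edge n)} {u v w : Fin n} {l : List (Fin n)}

theorem hdist_le_of_isWalk {k : ℕ} (h : IsWalk E u v l) (hk : l.length = k + 1) :
    hdist E u v ≤ k := by
  obtain ⟨l', hl', hlen⟩ := h.exists_isPathFromTo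
  obtain ⟨m, hm⟩ : ∃ m, l'.length = m + 1 := Nat.exists_eq_add_one.2 hl'.isWalk.length_pos
  calc hdist E u v ≤ m := sInf_le ⟨l', hl', by simp [hm]⟩
    _ ≤ k := by exact_mod_cast (by omega : m ≤ k)

theorem exists_isPathFromTo_length_eq (h : hdist E u v ≠ ⊤) :
    ∃ l, IsPathFromTo E u v l ∧ (l.length : ℕ∞) = hdist E u v + 1 := by
  have hne : {k : ℕ∞ | ∃ l, IsPathFromTo E u v l ∧ (l.length : ℕ∞) = k + 1}.Nonempty := by
    by_contra he
    exact h (by rw [hdist, Set.not_nonempty_iff_eq_empty.1 he, sInf_empty])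
  exact csInf_mem hne

theorem hdist_ne_top_iff : hdist E u v ≠ ⊤ ↔ ∃ l, IsPathFromTo E u v l := by
  refine ⟨fun h => (exists_isPathFromTo_length_eq h).imp fun _ => And.left, ?_⟩
  rintro ⟨l, hl⟩
  exact ne_top_of_le_ne_top (ENat.natCast_ne_top _)
    (hdist_le_of_isWalk hl.isWalk (Nat.succ_pred_eq_of_pos hl.isWalk.length_pos).symm)

theorem hdist_anti (hE : E ⊆ E') (u v : Fin n) : hdist E' u v ≤ hdist E u v :=
  sInf_le_sInf fun _ ⟨l, hl, hlen⟩ => ⟨l, hl.mono hE, hlen⟩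

theorem hdist_self (u : Fin n) : hdist E u u = 0 :=
  nonpos_iff_eq_zero.1 (hdist_le_of_isWalk ⟨.singleton u, rfl, rfl⟩ rfl)

theorem hdist_le_one_of_mem (h : (u, v) ∈ E) : hdist E u v ≤ 1 :=
  hdist_le_of_isWalk ⟨List.isChain_pair.2 h, rfl, rfl⟩ rfl

theorem hdist_triangle (u v w : Fin n) : hdist E u w ≤ hdist E u v + hdist E v w := by
  by_cases huv : hdist E u v = ⊤
  · simp [huv]
  by_cases hvw : hdist E v w = ⊤
  · simp [hvw]
  obtain ⟨l₁, hl₁, hlen₁⟩ := exists_isPathFromTo_length_eq huv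
  obtain ⟨_ | ⟨a, l₂⟩, hl₂, hlen₂⟩ := exists_isPathFromTo_length_eq hvw
  · exact absurd hl₂.isWalk.length_pos (lt_irrefl 0)
  have ha : a = v := by simpa using hl₂.2.1
  subst a
  lift hdist E u v to ℕ using huv with d₁
  lift hdist E v w to ℕ using hvw with d₂
  have hlen : (l₁ ++ l₂).length = d₁ + d₂ + 1 := by
    simp only [List.length_cons] at hlen₂
    rw [List.length_append]
    norm_cast at hlen₁ hlen₂
    omega
  exact_mod_cast hdist_le_of_isWalk (hl₁.isWalk.append hl₂.isWalk) hlen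

theorem hdist_le_of_getElem? {i j : ℕ} {a b : Fin n}
    (hl : l.IsChain (fun a b => (a, b) ∈ E)) (hij : i ≤ j)
    (ha : l[i]? = some a) (hb : l[j]? = some b) : hdist E a b ≤ (j - i : ℕ) := by
  induction j, hij using Nat.le_induction generalizing b with
  | base =>
    obtain rfl : a = b := Option.some_inj.1 (ha.symm.trans hb)
    simp [hdist_self]
  | succ j hij ih =>
    obtain ⟨hj, rfl⟩ := List.getElem?_eq_some_iff.1 hb
    calc hdist E a l[j + 1] ≤ hdist E a l[j] + hdist E l[j] l[j + 1] := hdist_triangle _ _ _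
      _ ≤ (j - i : ℕ) + 1 :=
        add_le_add (ih (List.getElem?_eq_getElem _)) (hdist_le_one_of_mem (hl.getElem j hj))
      _ = (j + 1 - i : ℕ) := by norm_cast; omega

theorem hdist_eq_of_isPathFromTo_of_forall_length_le (h : IsPathFromTo E u v l)
    (hmin : ∀ l', IsPathFromTo E u v l' → l.length ≤ l'.length) :
    hdist E u v = (l.length - 1 : ℕ) := by
  have hl : l.length = l.length - 1 + 1 := (Nat.succ_pred_eq_of_pos h.isWalk.length_pos).symm
  have hle := hdist_le_of_isWalk h.isWalk hl
  obtain ⟨l', hl', hlen'⟩ := exists_isPathFromTo_length_eq (ne_top_of_le_ne_top (by simp) hle)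
  refine le_antisymm hle ?_
  lift hdist E u v to ℕ using ne_top_of_le_ne_top (by simp) hle with d
  have := hmin l' hl'
  norm_cast at hlen' ⊢
  omega

end Distance

section Reachability

variable {n : ℕ} {E H : Set (Edge n)} {u v : Fin n}

theorem reflTransGen_of_union_of_subset_tcset (hH : H ⊆ TCset E)
    (h : Relation.ReflTransGen (fun a b => (a, b) ∈ E ∪ H) u v) :
    Relation.ReflTransGen (fun a b => (a, b) ∈ E) u v :=
  Relation.reflTransGen_closed
    (fun _ _ hab => hab.elim (fun h => .single h) fun hab =>
      exists_isPathFromTo_iff_reflTransGen.1 (hH hab).2)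
    _ _ h

theorem tcrel_of_getElem? (hH : H ⊆ TCset E) {π : List (Fin n)} (hπ : IsPathList (E ∪ H) π)
    {i j : ℕ} (hij : i < j) (hu : π[i]? = some u) (hv : π[j]? = some v) : TCrel E u v := by
  refine ⟨fun huv => ?_, ?_⟩
  · obtain ⟨hi, rfl⟩ := List.getElem?_eq_some_iff.1 hu
    obtain ⟨hj, hjv⟩ := List.getElem?_eq_some_iff.1 hv
    exact hij.ne ((hπ.1.getElem_inj_iff).1 (huv.trans hjv.symm))
  · obtain ⟨l, hl⟩ := hdist_ne_top_iff.1
      (ne_top_of_le_ne_top (ENat.natCast_ne_top _) (hdist_le_of_getElem? hπ.2 hij.le hu hv))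
    exact exists_isPathFromTo_iff_reflTransGen.2
      (reflTransGen_of_union_of_subset_tcset hH (exists_isPathFromTo_iff_reflTransGen.1 ⟨l, hl⟩))

end Reachability

section Potential

variable {n : ℕ} {E H H' : Set (Edge n)} {β : ℕ}

noncomputable def pairPotential (E H : Set (Edge n)) (β : ℕ) (p : Edge n) : ℕ :=
  if TCrel E p.1 p.2 ∧ (β : ℕ∞) ≤ hdist (E ∪ H) p.1 p.2 then (hdist (E ∪ H) p.1 p.2).toNat
  else 0

theorem pairPotential_le_toNat_hdist (p : Edge n) :
    pairPotential E H β p ≤ (hdist (E ∪ H) p.1 p.2).toNat := by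
  unfold pairPotential
  split_ifs <;> simp

theorem pairPotential_anti (hH : H ⊆ H') (p : Edge n) :
    pairPotential E H' β p ≤ pairPotential E H β p := by
  have hle := hdist_anti (Set.union_subset_union_right E hH) p.1 p.2
  unfold pairPotential
  split_ifs with h' h h
  · exact ENat.toNat_le_toNat hle
      (hdist_ne_top_iff.2 (h.1.2.imp fun _ hl => hl.mono Set.subset_union_left))
  · exact absurd ⟨h'.1, h'.2.trans hle⟩ h
  all_goals exact Nat.zero_le _

theorem pdelta_eq_sum (e : Edge n) :
    pdelta E H β e = ∑ p, (pairPotential E H β p - pairPotential E (H ∪ {e}) β p) :=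
  (Finset.sum_tsub_distrib _ fun p _ => pairPotential_anti Set.subset_union_left p).symm

theorem ncard_mul_le_mul_pdelta {X : Set (Edge n)} {e : Edge n} {c d : ℕ}
    (h : ∀ p ∈ X, d ≤ c * (pairPotential E H β p - pairPotential E (H ∪ {e}) β p)) :
    X.ncard * d ≤ c * pdelta E H β e := by
  rw [pdelta_eq_sum, Finset.mul_sum, Set.ncard_eq_toFinset_card', ← smul_eq_mul,
    ← Finset.sum_const]
  calc ∑ _ ∈ X.toFinset, d
      ≤ ∑ p ∈ X.toFinset, c * (pairPotential E H β p - pairPotential E (H ∪ {e}) β p) :=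
        Finset.sum_le_sum fun p hp => h p (Set.mem_toFinset.1 hp)
    _ ≤ _ := Finset.sum_le_sum_of_subset (Finset.subset_univ _)

theorem sub_le_pairPotential_sub {p : Edge n} {a b : ℕ} (hp : TCrel E p.1 p.2)
    (hβ : (β : ℕ∞) ≤ hdist (E ∪ H) p.1 p.2) (ha : hdist (E ∪ H) p.1 p.2 = a)
    (hb : hdist (E ∪ H') p.1 p.2 ≤ b) :
    a - b ≤ pairPotential E H β p - pairPotential E H' β p := by
  have hold : pairPotential E H β p = a := by
    rw [pairPotential, if_pos ⟨hp, hβ⟩, ha, ENat.toNat_natCast]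
  have hnew : pairPotential E H' β p ≤ b :=
    (pairPotential_le_toNat_hdist p).trans (ENat.toNat_le_of_le_natCast hb)
  omega

end Potential

section Detour

variable {n : ℕ} {E H : Set (Edge n)}

theorem hdist_union_singleton_le {π q : List (Fin n)} {s t u v x : Fin n} {i j a b : ℕ}
    (hπ : IsWalk E s t π) (hq : q.IsChain (fun a b => (a, b) ∈ E))
    (hu : π[i]? = some u) (hx : π[j]? = some x)
    (hab : a ≤ b) (hv : q[a]? = some v) (hxq : q[b]? = some x) :
    hdist (E ∪ {(u, v)}) s t ≤ (i + 1 + (b - a) + (π.length - 1 - j) : ℕ) := by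
  set E' := E ∪ {(u, v)}
  have hE : E ⊆ E' := Set.subset_union_left
  have hj : j ≤ π.length - 1 := by
    have := (List.getElem?_eq_some_iff.1 hx).1
    omega
  have hs : π[0]? = some s := List.head?_eq_getElem? ▸ hπ.2.1
  have ht : π[π.length - 1]? = some t := List.getLast?_eq_getElem? ▸ hπ.2.2
  calc hdist E' s t ≤ hdist E' s u + hdist E' u v + hdist E' v x + hdist E' x t :=
        (hdist_triangle s x t).trans <| add_le_add_left
          ((hdist_triangle s v x).trans (add_le_add_left (hdist_triangle s u v) _)) _
    _ ≤ (i - 0 : ℕ) + 1 + (b - a : ℕ) + (π.length - 1 - j : ℕ) := by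
        gcongr
        · exact (hdist_anti hE _ _).trans (hdist_le_of_getElem? hπ.1 (Nat.zero_le i) hs hu)
        · exact hdist_le_one_of_mem (Or.inr rfl)
        · exact (hdist_anti hE _ _).trans (hdist_le_of_getElem? hq hab hv hxq)
        · exact (hdist_anti hE _ _).trans (hdist_le_of_getElem? hπ.1 hj hx ht)
    _ = _ := by push_cast; rfl

def IsQuarteredShortestPath (E : Set (Edge n)) (p : Edge n) (u x : Fin n)
    (π : List (Fin n)) : Prop :=
  IsPathFromTo E p.1 p.2 π ∧ (∀ l, IsPathFromTo E p.1 p.2 l → π.length ≤ l.length) ∧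
    (∃ i, i < π.length / 4 ∧ π[i]? = some u) ∧
    ∃ j, π.length - π.length / 4 ≤ j ∧ π[j]? = some x

theorem IsQuarteredShortestPath.tcrel (hH : H ⊆ TCset E) {p : Edge n} {u x : Fin n}
    {π : List (Fin n)} (h : IsQuarteredShortestPath (E ∪ H) p u x π) : TCrel E u x := by
  obtain ⟨hπ, -, ⟨i, hi, hu⟩, j, hj, hx⟩ := h
  exact tcrel_of_getElem? hH hπ.1 (by omega) hu hx

theorem IsQuarteredShortestPath.le_eight_mul_pairPotential_sub {β : ℕ} {p : Edge n}
    {u v x : Fin n} {π q : List (Fin n)} {a b : ℕ}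
    (h : IsQuarteredShortestPath (E ∪ H) p u x π) (hp : TCrel E p.1 p.2)
    (hβ : (β : ℕ∞) ≤ hdist (E ∪ H) p.1 p.2)
    (hq : q.IsChain (fun a b => (a, b) ∈ E ∪ H)) (hqlen : q.length ≤ β / 4)
    (hab : a ≤ b) (hv : q[a]? = some v) (hxq : q[b]? = some x) :
    β ≤ 8 * (pairPotential E H β p - pairPotential E (H ∪ {(u, v)}) β p) := by
  obtain ⟨hπ, hmin, ⟨i, hi, hu⟩, j, hj, hx⟩ := h
  have hold := hdist_eq_of_isPathFromTo_of_forall_length_le hπ hmin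
  have hnew : hdist (E ∪ (H ∪ {(u, v)})) p.1 p.2 ≤
      (i + 1 + (b - a) + (π.length - 1 - j) : ℕ) := by
    rw [← Set.union_assoc]
    exact hdist_union_singleton_le hπ.isWalk hq hu hx hab hv hxq
  have hk : β ≤ π.length - 1 := by
    rw [hold] at hβ
    exact_mod_cast hβ
  have hb : b < q.length := (List.getElem?_eq_some_iff.1 hxq).1
  have := sub_le_pairPotential_sub hp hβ hold hnew
  omega

end Detour

/-- **counting big triangles.** Let `G` be a directed graph on `n`
vertices, `β ≥ 8` an integer, `H ⊆ TC(G)`, `q` a shortest path between its endpoints in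
`G ∪ H` with at most `⌊β/4⌋` vertices, `q*` a subset of the vertices of `q`, and `u` a
vertex. Let `X` be the set of pairs `(s,t) ∈ TC(G)` with `dist_{G∪H}(s,t) ≥ β` admitting a
shortest `s`–`t` path `π` in `G ∪ H` such that `u` is among the first `⌊k/4⌋` vertices of
`π` and one of the last `⌊k/4⌋` vertices of `π` lies in `q*` (`k = |π|`). If `X ≠ ∅`,
then some `v ∈ q*` satisfies `(u,v) ∈ TC(G)` and `Δ((u,v) | H) ≥ (β/8)·|X|`. -/
theorem counting_big_triangles :
    ∀ (n : ℕ) (E : Set (Edge n)) (β : ℕ), 8 ≤ β →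
      ∀ H : Set (Edge n), H ⊆ TCset E →
        ∀ (q : List (Fin n)) (s t : Fin n),
          IsPathFromTo (E ∪ H) s t q →
          (∀ l : List (Fin n), IsPathFromTo (E ∪ H) s t l → q.length ≤ l.length) →
          q.length ≤ β / 4 →
          ∀ qstar : Set (Fin n), qstar ⊆ {x : Fin n | x ∈ q} →
            ∀ u : Fin n, ∀ X : Set (Edge n),
              X = {p : Edge n | p ∈ TCset E ∧ (β : ℕ∞) ≤ hdist (E ∪ H) p.1 p.2 ∧
                ∃ π : List (Fin n), IsPathFromTo (E ∪ H) p.1 p.2 π ∧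
                  (∀ l : List (Fin n), IsPathFromTo (E ∪ H) p.1 p.2 l →
                    π.length ≤ l.length) ∧
                  (∃ i : ℕ, i < π.length / 4 ∧ π[i]? = some u) ∧
                  (∃ (j : ℕ) (x : Fin n), π.length - π.length / 4 ≤ j ∧
                    π[j]? = some x ∧ x ∈ qstar)} →
              X.Nonempty →
              ∃ v ∈ qstar, TCrel E u v ∧
                (pdelta E H β (u, v) : ℝ) ≥ ((β : ℝ) / 8) * (X.ncard : ℝ) := by
  intro n E β _ H hH q s t hq _ hqlen qstar hqstar u X hX hXne
  have hX' : ∀ p ∈ X, TCrel E p.1 p.2 ∧ (β : ℕ∞) ≤ hdist (E ∪ H) p.1 p.2 ∧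
      ∃ x ∈ qstar, ∃ π, IsQuarteredShortestPath (E ∪ H) p u x π := by
    rw [hX]
    rintro p ⟨hp, hβp, π, hπ, hmin, hi, j, x, hj, hx, hxq⟩
    exact ⟨hp, hβp, x, hxq, π, hπ, hmin, hi, j, hj, hx⟩
  set W := {x ∈ qstar | ∃ p ∈ X, ∃ π, IsQuarteredShortestPath (E ∪ H) p u x π}
  have hWne : W.Nonempty := by
    obtain ⟨p, hp⟩ := hXne
    obtain ⟨-, -, x, hxq, π, hπ⟩ := hX' p hp
    exact ⟨x, hxq, p, hp, π, hπ⟩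
  obtain ⟨v, ⟨hvq, _, _, _, hπv⟩, hvmin⟩ := W.exists_min_image q.idxOf W.toFinite hWne
  refine ⟨v, hvq, hπv.tcrel hH, ?_⟩
  have key : X.ncard * β ≤ 8 * pdelta E H β (u, v) := ncard_mul_le_mul_pdelta fun p hp => by
    obtain ⟨hst, hβp, x, hxq, π, hπ⟩ := hX' p hp
    exact hπ.le_eight_mul_pairPotential_sub hst hβp hq.1.2 hqlen
      (hvmin x ⟨hxq, p, hp, π, hπ⟩) (List.getElem?_idxOf (hqstar hvq))
      (List.getElem?_idxOf (hqstar hxq))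
  rw [ge_iff_le, div_mul_eq_mul_div, div_le_iff₀ (by norm_num), mul_comm (β : ℝ),
    mul_comm _ (8 : ℝ)]
  exact_mod_cast key
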